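/- Let f, g be bounded measurable functions with ‖f − g‖_∞ ≤ 2ε for some 0 < 2ε < 1, and let P_f, P_g be the corresponding Gaussian regression densities with noise standard deviation σ. Then the Kullback-Leibler variation satisfies V_{2,0}(P_f, P_g) ≤ 4·(1/σ² + 1/(4σ⁴))·ε², where V_{2,0}(P,Q) = ∫ P·(log(P/Q) − KL(P,Q))². -/

import Mathlib

open MeasureTheory Real

/-- The density of a univariate Gaussian with mean `m` and standard deviation `σ`. -/
noncomputable def gaussDensity (m σ y : ℝ) : ℝ :=
  (σ * Real.sqrt (2 * π))⁻¹ * Real.exp (-(y - m) ^ 2 / (2 * σ ^ 2))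

/-!
The log-likelihood ratio `log (P_f / P_g) (x, y) = a(x) (y - f(x)) + b(x)`, with
`a = (f - g) / σ²` and `b = (f - g)² / (2σ²)`, is affine in `y` and centred at the mean of
`φ_{f(x),σ}`. Integrating out `y` with the first two Gaussian moments gives `KL = ∫ G b` and
`V_{2,0} = ∫ G (a² σ² + (b - KL)²)`. When `|f - g| ≤ 2ε`, both `b` and `KL` lie in
`[0, 2ε²/σ²]`, so the integrand is at most `4ε²/σ² + 4ε⁴/σ⁴`, and `4ε² ≤ 1` bounds the last
term by `ε²/σ⁴`.
-/

open ProbabilityTheory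
open scoped NNReal

namespace ProbabilityTheory

variable {m : ℝ} {v : ℝ≥0}

lemma integral_sq_gaussianReal : ∫ y, y ^ 2 ∂gaussianReal m v = v + m ^ 2 := by
  have h := variance_eq_sub (memLp_id_gaussianReal (μ := m) (v := v) 2)
  simp only [variance_id_gaussianReal, Pi.pow_apply, id_eq, integral_id_gaussianReal] at h
  linarith

lemma gaussianReal_map_affine (α β : ℝ) :
    (gaussianReal m v).map (fun y ↦ α * (y - m) + β) =
      gaussianReal β (⟨α ^ 2, sq_nonneg α⟩ * v) := by
  have : (fun y ↦ α * (y - m) + β) = (· + β) ∘ (α * ·) ∘ (· - m) := rfl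
  rw [this, ← Measure.map_map (by fun_prop) (by fun_prop),
    ← Measure.map_map (by fun_prop) (by fun_prop), gaussianReal_map_sub_const,
    gaussianReal_map_const_mul, gaussianReal_map_add_const, sub_self, mul_zero, zero_add]
  rfl

lemma integral_affine_gaussianReal (α β : ℝ) :
    ∫ y, α * (y - m) + β ∂gaussianReal m v = β := by
  have h := integral_map (μ := gaussianReal m v) (f := fun z ↦ z)
    (φ := fun y ↦ α * (y - m) + β) (by fun_prop) (by fun_prop)
  rwa [gaussianReal_map_affine, integral_id_gaussianReal, eq_comm] at h

lemma integral_affine_sq_gaussianReal (α β : ℝ) :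
    ∫ y, (α * (y - m) + β) ^ 2 ∂gaussianReal m v = α ^ 2 * v + β ^ 2 := by
  have h := integral_map (μ := gaussianReal m v) (f := fun z ↦ z ^ 2)
    (φ := fun y ↦ α * (y - m) + β) (by fun_prop) (by fun_prop)
  rwa [gaussianReal_map_affine, integral_sq_gaussianReal, eq_comm] at h

lemma integrable_affine_sq_gaussianReal (α β : ℝ) :
    Integrable (fun y ↦ (α * (y - m) + β) ^ 2) (gaussianReal m v) := by
  have h := (memLp_id_gaussianReal (μ := β) (v := ⟨α ^ 2, sq_nonneg α⟩ * v) 2).integrable_sq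
  rwa [← gaussianReal_map_affine (m := m), integrable_map_measure (by fun_prop) (by fun_prop)]
    at h

end ProbabilityTheory

section gaussDensity

variable {σ : ℝ}

lemma gaussDensity_eq_gaussianPDFReal (hσ : 0 ≤ σ) (m y : ℝ) :
    gaussDensity m σ y = gaussianPDFReal m (σ ^ 2).toNNReal y := by
  rw [gaussDensity, gaussianPDFReal, Real.coe_toNNReal _ (sq_nonneg σ),
    show 2 * π * σ ^ 2 = σ ^ 2 * (2 * π) by ring, Real.sqrt_mul (sq_nonneg σ), Real.sqrt_sq hσ]

lemma gaussDensity_pos (hσ : 0 < σ) (m y : ℝ) : 0 < gaussDensity m σ y := by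
  rw [gaussDensity_eq_gaussianPDFReal hσ.le]
  exact gaussianPDFReal_pos _ _ _ (by simp [hσ.ne'])

lemma integral_gaussDensity_mul (hσ : 0 < σ) (m : ℝ) (h : ℝ → ℝ) :
    ∫ y, gaussDensity m σ y * h y = ∫ y, h y ∂gaussianReal m (σ ^ 2).toNNReal := by
  simp_rw [integral_gaussianReal_eq_integral_smul (by simp [hσ.ne'] : (σ ^ 2).toNNReal ≠ 0),
    gaussDensity_eq_gaussianPDFReal hσ.le, smul_eq_mul]

lemma integrable_gaussDensity_mul_iff (hσ : 0 < σ) (m : ℝ) (h : ℝ → ℝ) :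
    Integrable (fun y ↦ gaussDensity m σ y * h y) ↔
      Integrable h (gaussianReal m (σ ^ 2).toNNReal) := by
  rw [gaussianReal_of_var_ne_zero _ (by simp [hσ.ne']),
    integrable_withDensity_iff_integrable_smul' (measurable_gaussianPDF _ _)
      (ae_of_all _ fun _ ↦ gaussianPDF_lt_top)]
  simp [toReal_gaussianPDF, gaussDensity_eq_gaussianPDFReal hσ.le]

lemma log_gaussDensity_div (hσ : 0 < σ) (m m' y : ℝ) :
    log (gaussDensity m σ y / gaussDensity m' σ y) =
      (m - m') / σ ^ 2 * (y - m) + (m - m') ^ 2 / (2 * σ ^ 2) := by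
  have hc : σ * √(2 * π) ≠ 0 := by positivity
  rw [gaussDensity, gaussDensity, mul_div_mul_left _ _ (inv_ne_zero hc), ← Real.exp_sub,
    Real.log_exp]
  field_simp
  ring

lemma integral_gaussDensity_mul_affine (hσ : 0 < σ) (m α β : ℝ) :
    ∫ y, gaussDensity m σ y * (α * (y - m) + β) = β := by
  rw [integral_gaussDensity_mul hσ, integral_affine_gaussianReal]

lemma integral_gaussDensity_mul_affine_sq (hσ : 0 < σ) (m α β : ℝ) :
    ∫ y, gaussDensity m σ y * (α * (y - m) + β) ^ 2 = α ^ 2 * σ ^ 2 + β ^ 2 := by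
  rw [integral_gaussDensity_mul hσ, integral_affine_sq_gaussianReal,
    Real.coe_toNNReal _ (sq_nonneg σ)]

lemma integrable_gaussDensity_mul_affine_sq (hσ : 0 < σ) (m α β : ℝ) :
    Integrable (fun y ↦ gaussDensity m σ y * (α * (y - m) + β) ^ 2) :=
  (integrable_gaussDensity_mul_iff hσ m _).2 (integrable_affine_sq_gaussianReal α β)

end gaussDensity

section regressionDensity

variable {X : Type*} {G f g α β : X → ℝ} {σ : ℝ}

/-- `P_f` of the Gaussian regression model. -/
noncomputable def regressionDensity (G f : X → ℝ) (σ : ℝ) (p : X × ℝ) : ℝ :=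
  G p.1 * gaussDensity (f p.1) σ p.2

lemma regressionDensity_mul_comp_log_div (hσ : 0 < σ) (hGnn : ∀ x, 0 ≤ G x) (g : X → ℝ)
    (Φ : ℝ → ℝ) (p : X × ℝ) :
    regressionDensity G f σ p *
        Φ (log (regressionDensity G f σ p / regressionDensity G g σ p)) =
      regressionDensity G f σ p *
        Φ ((f p.1 - g p.1) / σ ^ 2 * (p.2 - f p.1) + (f p.1 - g p.1) ^ 2 / (2 * σ ^ 2)) := by
  rcases (hGnn p.1).eq_or_lt with hG0 | hGpos
  · simp [regressionDensity, ← hG0]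
  · rw [regressionDensity, regressionDensity, mul_div_mul_left _ _ hGpos.ne',
      log_gaussDensity_div hσ]

variable [MeasurableSpace X] {μ : Measure X}

lemma measurable_regressionDensity (hG : Measurable G) (hf : Measurable f) :
    Measurable (regressionDensity G f σ) := by
  unfold regressionDensity gaussDensity
  fun_prop

lemma integrable_regressionDensity_mul_affine_sq (hσ : 0 < σ) (hG : Measurable G)
    (hGnn : ∀ x, 0 ≤ G x) (hf : Measurable f) (hα : Measurable α) (hβ : Measurable β)
    (hGαβ : Integrable (fun x ↦ G x * (α x ^ 2 * σ ^ 2 + β x ^ 2)) μ) :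
    Integrable (fun p ↦ regressionDensity G f σ p * (α p.1 * (p.2 - f p.1) + β p.1) ^ 2)
      (μ.prod volume) := by
  have hPm := measurable_regressionDensity (σ := σ) hG hf
  refine (integrable_prod_iff (by fun_prop)).2 ⟨ae_of_all _ fun x ↦ ?_, hGαβ.congr ?_⟩
  · simpa only [regressionDensity, mul_assoc] using
      (integrable_gaussDensity_mul_affine_sq hσ (f x) (α x) (β x)).const_mul (G x)
  · refine ae_of_all _ fun x ↦ ?_
    simp only [regressionDensity, Real.norm_eq_abs]
    rw [← integral_gaussDensity_mul_affine_sq hσ (f x), ← integral_const_mul]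
    congr 1 with y
    rw [abs_of_nonneg (mul_nonneg (mul_nonneg (hGnn x) (gaussDensity_pos hσ (f x) y).le)
      (sq_nonneg _))]
    ring

lemma integral_regressionDensity_mul_affine_sq [SFinite μ] (hσ : 0 < σ) (hG : Measurable G)
    (hGnn : ∀ x, 0 ≤ G x) (hf : Measurable f) (hα : Measurable α) (hβ : Measurable β)
    (hGαβ : Integrable (fun x ↦ G x * (α x ^ 2 * σ ^ 2 + β x ^ 2)) μ) :
    ∫ p, regressionDensity G f σ p * (α p.1 * (p.2 - f p.1) + β p.1) ^ 2 ∂(μ.prod volume) =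
      ∫ x, G x * (α x ^ 2 * σ ^ 2 + β x ^ 2) ∂μ := by
  rw [integral_prod _ (integrable_regressionDensity_mul_affine_sq hσ hG hGnn hf hα hβ hGαβ)]
  congr 1 with x
  simp only [regressionDensity, mul_assoc]
  rw [integral_const_mul, integral_gaussDensity_mul_affine_sq hσ]

lemma integrable_regressionDensity_mul_affine (hσ : 0 < σ) (hG : Measurable G)
    (hGnn : ∀ x, 0 ≤ G x) (hGi : Integrable G μ) (hf : Measurable f) (hα : Measurable α)
    (hβ : Measurable β) (hGαβ : Integrable (fun x ↦ G x * (α x ^ 2 * σ ^ 2 + β x ^ 2)) μ) :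
    Integrable (fun p ↦ regressionDensity G f σ p * (α p.1 * (p.2 - f p.1) + β p.1))
      (μ.prod volume) := by
  -- `|t| ≤ 1 + t²` dominates the integrand by `P_f · (1 + t²)`; `P_f` is the case `α = 0, β = 1`
  have hP : Integrable (regressionDensity G f σ) (μ.prod volume) := by
    simpa using integrable_regressionDensity_mul_affine_sq (μ := μ) (f := f) (α := 0) (β := 1) hσ
      hG hGnn hf measurable_const measurable_const (by simpa using hGi)
  have hPm := measurable_regressionDensity (σ := σ) hG hf
  refine (hP.add (integrable_regressionDensity_mul_affine_sq hσ hG hGnn hf hα hβ hGαβ)).mono'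
    (by fun_prop) (ae_of_all _ fun p ↦ ?_)
  have hPnn : 0 ≤ regressionDensity G f σ p := mul_nonneg (hGnn p.1) (gaussDensity_pos hσ _ _).le
  set t := α p.1 * (p.2 - f p.1) + β p.1
  have ht : |t| ≤ 1 + t ^ 2 := by nlinarith [abs_mul_abs_self t, sq_nonneg (|t| - 1)]
  simp only [Pi.add_apply, Real.norm_eq_abs, abs_mul, abs_of_nonneg hPnn]
  nlinarith [mul_le_mul_of_nonneg_left ht hPnn]

lemma integral_regressionDensity_mul_affine [SFinite μ] (hσ : 0 < σ) (hG : Measurable G)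
    (hGnn : ∀ x, 0 ≤ G x) (hGi : Integrable G μ) (hf : Measurable f) (hα : Measurable α)
    (hβ : Measurable β) (hGαβ : Integrable (fun x ↦ G x * (α x ^ 2 * σ ^ 2 + β x ^ 2)) μ) :
    ∫ p, regressionDensity G f σ p * (α p.1 * (p.2 - f p.1) + β p.1) ∂(μ.prod volume) =
      ∫ x, G x * β x ∂μ := by
  rw [integral_prod _ (integrable_regressionDensity_mul_affine hσ hG hGnn hGi hf hα hβ hGαβ)]
  congr 1 with x
  simp only [regressionDensity, mul_assoc]
  rw [integral_const_mul, integral_gaussDensity_mul_affine hσ]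

lemma integrable_mul_sq_div_add_sq_sub (hGi : Integrable G μ)
    (hd2 : Integrable (fun x ↦ G x * (f x - g x) ^ 2) μ)
    (hd4 : Integrable (fun x ↦ G x * (f x - g x) ^ 4) μ) (c : ℝ) :
    Integrable (fun x ↦ G x * (((f x - g x) / σ ^ 2) ^ 2 * σ ^ 2 +
      ((f x - g x) ^ 2 / (2 * σ ^ 2) - c) ^ 2)) μ := by
  refine (((hd2.const_mul ((1 - c) / σ ^ 2)).add (hd4.const_mul (1 / (4 * σ ^ 4)))).add
    (hGi.mul_const (c ^ 2))).congr (ae_of_all _ fun x ↦ ?_)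
  rcases eq_or_ne σ 0 with rfl | hσ
  · simp
  · simp only [Pi.add_apply]
    field_simp
    ring

lemma integral_regressionDensity_mul_log_div [SFinite μ] (hσ : 0 < σ) (hG : Measurable G)
    (hGnn : ∀ x, 0 ≤ G x) (hGi : Integrable G μ) (hf : Measurable f) (hg : Measurable g)
    (hd2 : Integrable (fun x ↦ G x * (f x - g x) ^ 2) μ)
    (hd4 : Integrable (fun x ↦ G x * (f x - g x) ^ 4) μ) :
    ∫ p, regressionDensity G f σ p *
        log (regressionDensity G f σ p / regressionDensity G g σ p) ∂(μ.prod volume) =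
      (∫ x, G x * (f x - g x) ^ 2 ∂μ) / (2 * σ ^ 2) := by
  calc _ = ∫ p, regressionDensity G f σ p * ((f p.1 - g p.1) / σ ^ 2 * (p.2 - f p.1) +
        (f p.1 - g p.1) ^ 2 / (2 * σ ^ 2)) ∂(μ.prod volume) :=
        integral_congr_ae (ae_of_all _ (regressionDensity_mul_comp_log_div hσ hGnn g id))
    _ = ∫ x, G x * ((f x - g x) ^ 2 / (2 * σ ^ 2)) ∂μ := by
        refine integral_regressionDensity_mul_affine (α := fun x ↦ (f x - g x) / σ ^ 2)
          (β := fun x ↦ (f x - g x) ^ 2 / (2 * σ ^ 2)) hσ hG hGnn hGi hf (by fun_prop)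
          (by fun_prop) ?_
        simpa using integrable_mul_sq_div_add_sq_sub hGi hd2 hd4 0
    _ = _ := by simp only [← mul_div_assoc, integral_div]

lemma integral_regressionDensity_mul_log_div_sub_sq [SFinite μ] (hσ : 0 < σ)
    (hG : Measurable G) (hGnn : ∀ x, 0 ≤ G x) (hGi : Integrable G μ) (hf : Measurable f)
    (hg : Measurable g) (hd2 : Integrable (fun x ↦ G x * (f x - g x) ^ 2) μ)
    (hd4 : Integrable (fun x ↦ G x * (f x - g x) ^ 4) μ) (c : ℝ) :
    ∫ p, regressionDensity G f σ p *
        (log (regressionDensity G f σ p / regressionDensity G g σ p) - c) ^ 2 ∂(μ.prod volume) =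
      ∫ x, G x * ((f x - g x) ^ 2 / σ ^ 2 + ((f x - g x) ^ 2 / (2 * σ ^ 2) - c) ^ 2) ∂μ := by
  calc _ = ∫ p, regressionDensity G f σ p * ((f p.1 - g p.1) / σ ^ 2 * (p.2 - f p.1) +
        ((f p.1 - g p.1) ^ 2 / (2 * σ ^ 2) - c)) ^ 2 ∂(μ.prod volume) :=
        integral_congr_ae (ae_of_all _ fun p ↦
          (regressionDensity_mul_comp_log_div hσ hGnn g (fun t ↦ (t - c) ^ 2) p).trans
            (by rw [add_sub_assoc]))
    _ = ∫ x, G x * (((f x - g x) / σ ^ 2) ^ 2 * σ ^ 2 +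
        ((f x - g x) ^ 2 / (2 * σ ^ 2) - c) ^ 2) ∂μ :=
        integral_regressionDensity_mul_affine_sq (α := fun x ↦ (f x - g x) / σ ^ 2)
          (β := fun x ↦ (f x - g x) ^ 2 / (2 * σ ^ 2) - c) hσ hG hGnn hf (by fun_prop)
          (by fun_prop) (integrable_mul_sq_div_add_sq_sub hGi hd2 hd4 c)
    _ = _ := by
        congr 1 with x
        field_simp

lemma integral_regressionDensity_mul_log_div_sub_integral_sq [SFinite μ] (hσ : 0 < σ)
    (hG : Measurable G) (hGnn : ∀ x, 0 ≤ G x) (hGi : Integrable G μ) (hf : Measurable f)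
    (hg : Measurable g) (hd2 : Integrable (fun x ↦ G x * (f x - g x) ^ 2) μ)
    (hd4 : Integrable (fun x ↦ G x * (f x - g x) ^ 4) μ) :
    ∫ p, regressionDensity G f σ p *
        (log (regressionDensity G f σ p / regressionDensity G g σ p) -
          ∫ p', regressionDensity G f σ p' *
            log (regressionDensity G f σ p' / regressionDensity G g σ p') ∂(μ.prod volume)) ^ 2
        ∂(μ.prod volume) =
      ∫ x, G x * ((f x - g x) ^ 2 / σ ^ 2 + ((f x - g x) ^ 2 / (2 * σ ^ 2) -
        (∫ x', G x' * (f x' - g x') ^ 2 ∂μ) / (2 * σ ^ 2)) ^ 2) ∂μ := by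
  rw [integral_regressionDensity_mul_log_div hσ hG hGnn hGi hf hg hd2 hd4,
    integral_regressionDensity_mul_log_div_sub_sq hσ hG hGnn hGi hf hg hd2 hd4]

end regressionDensity

lemma integral_mul_le_of_forall_le {X : Type*} [MeasurableSpace X] {μ : Measure X}
    {G h : X → ℝ} {C : ℝ} (hGnn : ∀ x, 0 ≤ G x) (hGi : Integrable G μ) (hG1 : ∫ x, G x ∂μ = 1)
    (hh : AEStronglyMeasurable h μ) (h0 : ∀ x, 0 ≤ h x) (hC : ∀ x, h x ≤ C) :
    ∫ x, G x * h x ∂μ ≤ C := by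
  have hGh : Integrable (fun x ↦ G x * h x) μ :=
    hGi.mul_bdd hh (ae_of_all _ fun x ↦ by rw [Real.norm_of_nonneg (h0 x)]; exact hC x)
  have := integral_mono hGh (hGi.mul_const C) fun x ↦ mul_le_mul_of_nonneg_left (hC x) (hGnn x)
  rwa [integral_mul_const, hG1, one_mul] at this

lemma div_add_sq_div_sub_div_le {σ ε u m : ℝ} (hσ : 0 < σ) (hε : 0 < ε) (hε1 : 2 * ε < 1)
    (hu : u ∈ Set.Icc 0 (4 * ε ^ 2)) (hm : m ∈ Set.Icc 0 (4 * ε ^ 2)) :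
    u / σ ^ 2 + (u / (2 * σ ^ 2) - m / (2 * σ ^ 2)) ^ 2 ≤
      4 * (1 / σ ^ 2 + 1 / (4 * σ ^ 4)) * ε ^ 2 := by
  have hum : (u - m) ^ 2 ≤ (4 * ε ^ 2) ^ 2 :=
    sq_le_sq' (by linarith [hu.1, hm.2]) (by linarith [hu.2, hm.1])
  have hε4 : (4 * ε ^ 2) ^ 2 ≤ 4 * ε ^ 2 := by
    have : 4 * ε ^ 2 ≤ 1 := by nlinarith
    nlinarith [mul_le_mul_of_nonneg_left this (by positivity : 0 ≤ 4 * ε ^ 2)]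
  rw [← sub_div, div_pow]
  calc u / σ ^ 2 + (u - m) ^ 2 / (2 * σ ^ 2) ^ 2
      ≤ 4 * ε ^ 2 / σ ^ 2 + 4 * ε ^ 2 / (2 * σ ^ 2) ^ 2 := by gcongr; exacts [hu.2, hum.trans hε4]
    _ = 4 * (1 / σ ^ 2 + 1 / (4 * σ ^ 4)) * ε ^ 2 := by field_simp; ring

/-- if `‖f − g‖_∞ ≤ 2ε` with `0 < 2ε < 1`, then for the Gaussian
regression densities `P_f, P_g` with noise standard deviation `σ`, the Kullback-Leibler
variation satisfies `V_{2,0}(P_f, P_g) ≤ 4·(1/σ² + 1/(4σ⁴))·ε²`, where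
`V_{2,0}(P,Q) = ∫ P·(log(P/Q) − KL(P,Q))²`. -/
theorem kl_variation_bound
    {X : Type*} [MeasurableSpace X] (μ : Measure X) [SigmaFinite μ]
    (G f g : X → ℝ) (σ ε : ℝ) (hσ : 0 < σ) (hε : 0 < ε) (hε1 : 2 * ε < 1)
    (hG : Measurable G) (hGnn : ∀ x, 0 ≤ G x) (hGint : ∫ x, G x ∂μ = 1)
    (hf : Measurable f) (hg : Measurable g)
    (hfg : ∀ x, |f x - g x| ≤ 2 * ε) :
    (∫ p : X × ℝ,
        (G p.1 * gaussDensity (f p.1) σ p.2) *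
          (Real.log ((G p.1 * gaussDensity (f p.1) σ p.2) /
              (G p.1 * gaussDensity (g p.1) σ p.2)) -
            ∫ p' : X × ℝ,
              (G p'.1 * gaussDensity (f p'.1) σ p'.2) *
                Real.log ((G p'.1 * gaussDensity (f p'.1) σ p'.2) /
                  (G p'.1 * gaussDensity (g p'.1) σ p'.2)) ∂(μ.prod volume)) ^ 2
        ∂(μ.prod volume))
      ≤ 4 * (1 / σ ^ 2 + 1 / (4 * σ ^ 4)) * ε ^ 2 := by
  have hGi : Integrable G μ := .of_integral_ne_zero (by simp [hGint])
  have hd : ∀ x, (f x - g x) ^ 2 ∈ Set.Icc 0 (4 * ε ^ 2) := fun x ↦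
    ⟨sq_nonneg _, by nlinarith [sq_abs (f x - g x), abs_nonneg (f x - g x), hfg x]⟩
  have hGd : ∀ n, Integrable (fun x ↦ G x * (f x - g x) ^ n) μ := fun n ↦
    hGi.mul_bdd (by fun_prop) (ae_of_all _ fun x ↦ by
      rw [norm_pow, Real.norm_eq_abs]; exact pow_le_pow_left₀ (abs_nonneg _) (hfg x) n)
  have hm : ∫ x, G x * (f x - g x) ^ 2 ∂μ ∈ Set.Icc 0 (4 * ε ^ 2) :=
    ⟨integral_nonneg fun x ↦ mul_nonneg (hGnn x) (hd x).1,
      integral_mul_le_of_forall_le hGnn hGi hGint (by fun_prop) (fun x ↦ (hd x).1)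
        fun x ↦ (hd x).2⟩
  refine (integral_regressionDensity_mul_log_div_sub_integral_sq hσ hG hGnn hGi hf hg (hGd 2)
    (hGd 4)).trans_le ?_
  exact integral_mul_le_of_forall_le hGnn hGi hGint (by fun_prop) (fun x ↦ by positivity)
    fun x ↦ div_add_sq_div_sub_div_le hσ hε hε1 (hd x) hm
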